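/- Let A, B be maximal monotone operators on a real Hilbert space H with S = {u : z ∈ (I+A+B)(u)} ≠ ∅, and let (x_k) be generated by the splitting iteration x_{k} = β J_{(2r_{k-1}(1−β)/(β+r_{k-1}(1−β)))A}( (z_{k-1}+r_{k-1}y_{k-1})/(β+r_{k-1}(1−β)) + z ) − βz, y_k = (1/r_{k-1})(z_{k-1}+r_{k-1}y_{k-1}−x_k), z_k = β J_{(2r_k(1−β)/(β+r_k(1−β)))B}( (x_k − r_k y_k)/(β+r_k(1−β)) + z ) − βz, with β ∈ (0,1), r_0 ∈ (0, 2(1−β)/β), r_{k+1} = r_k/√(1+2r_k(1−β)/β). Then (1/β)x_k + z converges strongly to J_{A+B}(z) and ‖(1/β)x_{k+1} + z − J_{A+B}(z)‖ = O(1/k). -/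

import Mathlib

open scoped RealInnerProductSpace

variable {H : Type*} [NormedAddCommGroup H] [InnerProductSpace ℝ H] [CompleteSpace H]

/-- A set-valued operator is monotone. -/
def MonotoneOp (A : H → Set H) : Prop :=
  ∀ ⦃x y x' y' : H⦄, x' ∈ A x → y' ∈ A y → 0 ≤ ⟪x - y, x' - y'⟫

/-- A set-valued operator is σ-strongly monotone. -/
def StronglyMonotoneOp (σ : ℝ) (A : H → Set H) : Prop :=
  ∀ ⦃x y x' y' : H⦄, x' ∈ A x → y' ∈ A y → σ * ‖x - y‖ ^ 2 ≤ ⟪x - y, x' - y'⟫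

/-- A set-valued operator is maximal monotone. -/
def MaximalMonotoneOp (A : H → Set H) : Prop :=
  MonotoneOp A ∧ ∀ x x' : H, (∀ y y' : H, y' ∈ A y → 0 ≤ ⟪x - y, x' - y'⟫) → x' ∈ A x

/-- The operator `(A_z)^{(β)} : x ↦ 2(1-β)·A((1/β)x + z) + ((1-β)/β)x`. -/
def pert (A : H → Set H) (z : H) (β : ℝ) : H → Set H :=
  fun x => (fun u => (2 * (1 - β)) • u + ((1 - β) / β) • x) '' A (β⁻¹ • x + z)

/-! Write `α = (1 - β) / β`. In the scaled variable `x = β (v - z)` the iteration is a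
Douglas–Rachford type scheme with step sizes `r k` for the two `α`-strongly monotone operators
`P = pert A z β` and `Q = pert B z β`, and `p = β (u - z)` is a zero of `P + Q`: `a' ∈ P p` and
`-a' ∈ Q p`. Strong monotonicity gives `r k ‖e (k + 1)‖ ≤ r (k + 1) ‖e k‖` for the error
`e k = w k + r k • y k - p - r k • a'`, precisely because `r (k + 1) ^ 2 * (1 + 2 α r k) = r k ^ 2`;
hence `‖x (k + 1) - p‖ ≤ ‖e k‖ = O(r k)`.
Finally `1 / r (k + 1) = √(1 / r k ^ 2 + 2 α / r k)` grows linearly, so `r k = O(1 / k)`. -/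

open Filter Topology

section Operators

variable {E : Type*} [NormedAddCommGroup E] [InnerProductSpace ℝ E]

theorem MonotoneOp.stronglyMonotoneOp_pert {A : E → Set E} (hA : MonotoneOp A) (z : E)
    {β : ℝ} (hβ : 0 < β) (hβ1 : β ≤ 1) :
    StronglyMonotoneOp ((1 - β) / β) (pert A z β) := by
  rintro x y _ _ ⟨m, hm, rfl⟩ ⟨n, hn, rfl⟩
  have hmn : 0 ≤ ⟪x - y, m - n⟫ := by
    have h := hA hm hn
    rw [show β⁻¹ • x + z - (β⁻¹ • y + z) = β⁻¹ • (x - y) by module, real_inner_smul_left] at h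
    exact (mul_nonneg_iff_of_pos_left (inv_pos.2 hβ)).1 h
  have hexp : (2 * (1 - β)) • m + ((1 - β) / β) • x - ((2 * (1 - β)) • n + ((1 - β) / β) • y)
      = (2 * (1 - β)) • (m - n) + ((1 - β) / β) • (x - y) := by module
  rw [hexp, inner_add_right, real_inner_smul_right, real_inner_smul_right,
    real_inner_self_eq_norm_sq]
  nlinarith

theorem exists_mem_pert_of_eq_resolvent {A : E → Set E} {J : ℝ → E → E}
    (hJ : ∀ s : ℝ, 0 < s → ∀ q : E, ∃ m ∈ A (J s q), q = J s q + s • m)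
    {z : E} {β ρ : ℝ} (hβ : 0 < β) (hβ1 : β < 1) (hρ : 0 < ρ) {inp out : E}
    (hout : out = β • J (2 * ρ * (1 - β) / (β + ρ * (1 - β)))
      ((β + ρ * (1 - β))⁻¹ • inp + z) - β • z) :
    ∃ v ∈ pert A z β out, inp = out + ρ • v := by
  have hd : 0 < β + ρ * (1 - β) := by nlinarith
  obtain ⟨m, hm, hq⟩ := hJ (2 * ρ * (1 - β) / (β + ρ * (1 - β))) (div_pos (by nlinarith) hd)
    ((β + ρ * (1 - β))⁻¹ • inp + z)
  set U := J (2 * ρ * (1 - β) / (β + ρ * (1 - β))) ((β + ρ * (1 - β))⁻¹ • inp + z)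
  have hU : β⁻¹ • out + z = U := by
    rw [hout, smul_sub, smul_smul, smul_smul, inv_mul_cancel₀ hβ.ne', one_smul, one_smul,
      sub_add_cancel]
  refine ⟨(2 * (1 - β)) • m + ((1 - β) / β) • out, ⟨m, hU ▸ hm, rfl⟩, ?_⟩
  have hinp : inp = (β + ρ * (1 - β)) • ((β + ρ * (1 - β))⁻¹ • inp + z - z) := by
    rw [add_sub_cancel_right, smul_smul, mul_inv_cancel₀ hd.ne', one_smul]
  rw [hinp, hq, hout]
  match_scalars <;> field_simp; ring

theorem mem_pert_of_eq_resolvent {A : E → Set E} {J : ℝ → E → E}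
    (hJ : ∀ s : ℝ, 0 < s → ∀ q : E, ∃ m ∈ A (J s q), q = J s q + s • m)
    {z : E} {β ρ : ℝ} (hβ : 0 < β) (hβ1 : β < 1) (hρ : 0 < ρ) {inp out v : E}
    (hout : out = β • J (2 * ρ * (1 - β) / (β + ρ * (1 - β)))
      ((β + ρ * (1 - β))⁻¹ • inp + z) - β • z)
    (hv : v = ρ⁻¹ • (inp - out)) :
    v ∈ pert A z β out ∧ inp = out + ρ • v := by
  obtain ⟨v', hv', rfl⟩ := exists_mem_pert_of_eq_resolvent hJ hβ hβ1 hρ hout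
  rw [hv, add_sub_cancel_left, smul_smul, inv_mul_cancel₀ hρ.ne', one_smul]
  exact ⟨hv', rfl⟩

theorem exists_mem_pert_neg_mem_pert {A B : E → Set E} {β : ℝ} (hβ : β ≠ 0) {z u a b : E}
    (ha : a ∈ A u) (hb : b ∈ B u) (hz : z = u + a + b) :
    ∃ a', a' ∈ pert A z β (β • (u - z)) ∧ -a' ∈ pert B z β (β • (u - z)) := by
  have hu : β⁻¹ • β • (u - z) + z = u := by
    rw [smul_smul, inv_mul_cancel₀ hβ, one_smul, sub_add_cancel]
  refine ⟨_, ⟨a, by rwa [hu], rfl⟩, b, by rwa [hu], ?_⟩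
  rw [hz, smul_smul, div_mul_cancel₀ _ hβ]
  module

theorem sq_mul_norm_sub_smul_le {α ρ ρ' : ℝ} (hα : 0 ≤ α) (hρ : 0 < ρ) (hρ' : 0 < ρ')
    (hsq : ρ' ^ 2 * (1 + 2 * ρ * α) = ρ ^ 2) {p q p' q' : E} (hp' : p' = p - ρ' • q - ρ' • q')
    (hpq : α * ‖p‖ ^ 2 ≤ ⟪p, q⟫) (hpq' : α * ‖p'‖ ^ 2 ≤ ⟪p', q'⟫) :
    ρ ^ 2 * ‖p - ρ' • q'‖ ^ 2 ≤ ρ' ^ 2 * ‖p + ρ • q‖ ^ 2 := by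
  have e1 : ‖p - ρ' • q'‖ ^ 2 = ‖p‖ ^ 2 - 2 * (ρ' * ⟪p, q'⟫) + ρ' ^ 2 * ‖q'‖ ^ 2 := by
    rw [norm_sub_sq_real, real_inner_smul_right, norm_smul, Real.norm_eq_abs, abs_of_pos hρ']
    ring
  have e2 : ‖p + ρ • q‖ ^ 2 = ‖p‖ ^ 2 + 2 * (ρ * ⟪p, q⟫) + ρ ^ 2 * ‖q‖ ^ 2 := by
    rw [norm_add_sq_real, real_inner_smul_right, norm_smul, Real.norm_eq_abs, abs_of_pos hρ]
    ring
  have hq' : 0 ≤ ⟪p, q'⟫ - ρ' * ⟪q, q'⟫ - ρ' * ‖q'‖ ^ 2 := by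
    rw [hp', inner_sub_left, inner_sub_left, real_inner_smul_left, real_inner_smul_left,
      real_inner_self_eq_norm_sq] at hpq'
    nlinarith [mul_nonneg hα (sq_nonneg ‖p'‖)]
  have hqq' : 0 ≤ ‖q‖ ^ 2 + 2 * ⟪q, q'⟫ + ‖q'‖ ^ 2 := by
    rw [← norm_add_sq_real]; positivity
  -- RHS - LHS = 2ρρ'²(⟪p, q⟫ - α‖p‖²) + 2ρ²ρ'·hq' + ρ²ρ'²‖q + q'‖², using `hsq`
  rw [e1, e2]
  nlinarith [mul_nonneg (by positivity : (0:ℝ) ≤ 2 * ρ * ρ' ^ 2) (sub_nonneg.2 hpq),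
    mul_nonneg (by positivity : (0:ℝ) ≤ 2 * ρ' * ρ ^ 2) hq',
    mul_nonneg (by positivity : (0:ℝ) ≤ ρ ^ 2 * ρ' ^ 2) hqq',
    mul_le_mul_of_nonneg_left hsq.le (sq_nonneg ‖p‖)]

theorem StronglyMonotoneOp.mul_norm_step_le {P Q : E → Set E} {α ρ ρ' : ℝ}
    (hP : StronglyMonotoneOp α P) (hQ : StronglyMonotoneOp α Q) (hα : 0 ≤ α) (hρ : 0 < ρ)
    (hρ' : 0 < ρ') (hsq : ρ' ^ 2 * (1 + 2 * ρ * α) = ρ ^ 2) {p a x y w v : E}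
    (ha : a ∈ P p) (hb : -a ∈ Q p) (hy : y ∈ P x) (hv : v ∈ Q w)
    (hxw : x - ρ' • y = w + ρ' • v) :
    ρ * ‖w + ρ' • y - p - ρ' • a‖ ≤ ρ' * ‖x + ρ • y - p - ρ • a‖ := by
  obtain rfl : w = x - ρ' • y - ρ' • v := eq_sub_of_add_eq hxw.symm
  have key := sq_mul_norm_sub_smul_le (q := y - a) (q' := v - -a) hα hρ hρ' hsq
    (by module) (hP hy ha) (hQ hv hb)
  rw [show x - p - ρ' • (v - -a) = x - ρ' • y - ρ' • v + ρ' • y - p - ρ' • a by module,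
    show x - p + ρ • (y - a) = x + ρ • y - p - ρ • a by module, ← mul_pow, ← mul_pow] at key
  exact pow_le_pow_iff_left₀ (by positivity) (by positivity) two_ne_zero |>.1 key

theorem norm_sub_le_of_stronglyMonotoneOp {P : E → Set E} {α ρ : ℝ}
    (hP : StronglyMonotoneOp α P) (hα : 0 ≤ α) (hρ : 0 ≤ ρ) {p a x y : E}
    (ha : a ∈ P p) (hy : y ∈ P x) :
    ‖x - p‖ ≤ ‖x + ρ • y - p - ρ • a‖ := by
  have hxy : 0 ≤ ⟪x - p, y - a⟫ := (mul_nonneg hα (sq_nonneg _)).trans (hP hy ha)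
  rw [show x + ρ • y - p - ρ • a = (x - p) + ρ • (y - a) by module]
  refine pow_le_pow_iff_left₀ (norm_nonneg _) (norm_nonneg _) two_ne_zero |>.1 ?_
  rw [norm_add_sq_real, real_inner_smul_right, norm_smul]
  nlinarith [mul_nonneg hρ hxy, sq_nonneg (‖ρ‖ * ‖y - a‖)]

theorem StronglyMonotoneOp.norm_sub_le_div_mul {P Q : E → Set E} {α : ℝ}
    (hP : StronglyMonotoneOp α P) (hQ : StronglyMonotoneOp α Q) (hα : 0 ≤ α)
    {p a : E} (ha : a ∈ P p) (hb : -a ∈ Q p) {r : ℕ → ℝ} (hr : ∀ k, 0 < r k)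
    (hsq : ∀ k, r (k + 1) ^ 2 * (1 + 2 * r k * α) = r k ^ 2) {x y w : ℕ → E}
    (hxP : ∀ k, y (k + 1) ∈ P (x (k + 1)))
    (hxy : ∀ k, w k + r k • y k = x (k + 1) + r k • y (k + 1))
    (hwQ : ∀ k, ∃ v ∈ Q (w (k + 1)), x (k + 1) - r (k + 1) • y (k + 1) = w (k + 1) + r (k + 1) • v)
    (k : ℕ) :
    ‖x (k + 1) - p‖ ≤ ‖w 0 + r 0 • y 0 - p - r 0 • a‖ / r 0 * r k := by
  set err : ℕ → E := fun k => w k + r k • y k - p - r k • a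
  have herr : ∀ k, err k = x (k + 1) + r k • y (k + 1) - p - r k • a := fun k => by
    simp only [err, hxy]
  have hanti : Antitone fun k => ‖err k‖ / r k := antitone_nat_of_succ_le fun k => by
    obtain ⟨v, hv, hxw⟩ := hwQ k
    rw [div_le_div_iff₀ (hr _) (hr _), mul_comm, herr k, mul_comm ‖_‖]
    exact hP.mul_norm_step_le hQ hα (hr k) (hr (k + 1)) (hsq k) ha hb (hxP k) hv hxw
  calc ‖x (k + 1) - p‖ ≤ ‖err k‖ / r k * r k := by
        rw [div_mul_cancel₀ _ (hr k).ne', herr k]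
        exact norm_sub_le_of_stronglyMonotoneOp hP hα (hr k).le ha (hxP k)
    _ ≤ ‖err 0‖ / r 0 * r k := mul_le_mul_of_nonneg_right (hanti k.zero_le) (hr k).le

end Operators

section StepSize

variable {α : ℝ} {r : ℕ → ℝ}

theorem pos_of_succ_eq_div_sqrt (hα : 0 ≤ α) (h0 : 0 < r 0)
    (hrec : ∀ k, r (k + 1) = r k / √(1 + 2 * r k * α)) (k : ℕ) : 0 < r k := by
  induction k with
  | zero => exact h0
  | succ k ih => rw [hrec]; exact div_pos ih (Real.sqrt_pos.2 (by positivity))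

theorem sq_succ_mul_eq_of_succ_eq_div_sqrt (hα : 0 ≤ α) (h0 : 0 < r 0)
    (hrec : ∀ k, r (k + 1) = r k / √(1 + 2 * r k * α)) (k : ℕ) :
    r (k + 1) ^ 2 * (1 + 2 * r k * α) = r k ^ 2 := by
  have := pos_of_succ_eq_div_sqrt hα h0 hrec k
  rw [hrec, div_pow, Real.sq_sqrt (by positivity), div_mul_cancel₀ _ (by positivity)]

theorem exists_le_div_of_succ_eq_div_sqrt (hα : 0 < α) (h0 : 0 < r 0)
    (hrec : ∀ k, r (k + 1) = r k / √(1 + 2 * r k * α)) :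
    ∃ C, ∀ k : ℕ, 1 ≤ k → r k ≤ C / k := by
  have hr := pos_of_succ_eq_div_sqrt hα.le h0 hrec
  set c := min (α / 2) (r 0)⁻¹
  have hc : 0 < c := lt_min (by positivity) (inv_pos.2 h0)
  have hgrow : ∀ k : ℕ, (r 0)⁻¹ + c * k ≤ (r k)⁻¹ := by
    intro k
    induction k with
    | zero => simp
    | succ k ih =>
      have hsq : (r (k + 1))⁻¹ ^ 2 = (r k)⁻¹ ^ 2 + 2 * α * (r k)⁻¹ := by
        have h := sq_succ_mul_eq_of_succ_eq_div_sqrt hα.le h0 hrec k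
        have := hr k
        have := hr (k + 1)
        field_simp
        linear_combination -h
      have hs : c ≤ (r k)⁻¹ :=
        (min_le_right _ _).trans (le_of_add_le_of_nonneg_left ih (mul_nonneg hc.le k.cast_nonneg))
      have hstep : (r k)⁻¹ + c ≤ (r (k + 1))⁻¹ := by
        refine pow_le_pow_iff_left₀ (add_pos (inv_pos.2 (hr k)) hc).le (inv_pos.2 (hr _)).le
          two_ne_zero |>.1 ?_
        nlinarith [min_le_left (α / 2) (r 0)⁻¹]
      push_cast
      linarith
  refine ⟨c⁻¹, fun k hk => ?_⟩
  have hck : c * k ≤ (r k)⁻¹ := le_of_add_le_of_nonneg_right (hgrow k) (inv_pos.2 h0).le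
  rw [div_eq_mul_inv, ← mul_inv, le_inv_comm₀ (hr k) (by positivity)]
  exact hck

end StepSize

theorem tendsto_of_norm_sub_succ_le_div {E : Type*} [SeminormedAddCommGroup E] {f : ℕ → E}
    {u : E} {C : ℝ} (h : ∀ k : ℕ, 1 ≤ k → ‖f (k + 1) - u‖ ≤ C / k) :
    Tendsto f atTop (𝓝 u) := by
  rw [← tendsto_add_atTop_iff_nat 1, tendsto_iff_norm_sub_tendsto_zero]
  exact squeeze_zero' (.of_forall fun _ => norm_nonneg _)
    ((eventually_ge_atTop 1).mono h) (tendsto_const_div_atTop_nhds_zero_nat C)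

theorem stmt14_general (A B : H → Set H) (hA : MaximalMonotoneOp A) (hB : MaximalMonotoneOp B)
    (z : H) (β : ℝ) (hβ : β ∈ Set.Ioo (0:ℝ) 1)
    (r : ℕ → ℝ) (h0 : r 0 ∈ Set.Ioo 0 (2 * (1 - β) / β))
    (hrec : ∀ k, r (k + 1) = r k / Real.sqrt (1 + 2 * r k * (1 - β) / β))
    (JA JB : ℝ → H → H)
    (hJA : ∀ s : ℝ, 0 < s → ∀ q : H, ∃ m ∈ A (JA s q), q = JA s q + s • m)
    (hJB : ∀ s : ℝ, 0 < s → ∀ q : H, ∃ m ∈ B (JB s q), q = JB s q + s • m)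
    (x y w : ℕ → H)
    (hx : ∀ k, x (k + 1) = β • JA (2 * r k * (1 - β) / (β + r k * (1 - β)))
        ((β + r k * (1 - β))⁻¹ • (w k + r k • y k) + z) - β • z)
    (hy : ∀ k, y (k + 1) = (r k)⁻¹ • (w k + r k • y k - x (k + 1)))
    (hw : ∀ k, w (k + 1) = β • JB (2 * r (k + 1) * (1 - β) / (β + r (k + 1) * (1 - β)))
        ((β + r (k + 1) * (1 - β))⁻¹ • (x (k + 1) - r (k + 1) • y (k + 1)) + z) - β • z)
    (u : H) (hu : ∃ a ∈ A u, ∃ b ∈ B u, z = u + a + b) :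
    Filter.Tendsto (fun k => β⁻¹ • x k + z) Filter.atTop (nhds u) ∧
      ∃ C : ℝ, ∀ k : ℕ, 1 ≤ k → ‖β⁻¹ • x (k + 1) + z - u‖ ≤ C / k := by
  obtain ⟨hβ0, hβ1⟩ := hβ
  obtain ⟨hr0, -⟩ := h0
  have hα : 0 < (1 - β) / β := div_pos (by linarith) hβ0
  have hrec' : ∀ k, r (k + 1) = r k / √(1 + 2 * r k * ((1 - β) / β)) := by
    simpa only [mul_div_assoc] using hrec
  have hr := pos_of_succ_eq_div_sqrt hα.le hr0 hrec'
  obtain ⟨C, hC⟩ := exists_le_div_of_succ_eq_div_sqrt hα hr0 hrec'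
  obtain ⟨a, ha, b, hb, hz⟩ := hu
  obtain ⟨a', hpA, hpB⟩ := exists_mem_pert_neg_mem_pert (B := B) hβ0.ne' ha hb hz
  have hxA k := mem_pert_of_eq_resolvent hJA hβ0 hβ1 (hr k) (hx k) (hy k)
  have hsplit := (hA.1.stronglyMonotoneOp_pert z hβ0 hβ1.le).norm_sub_le_div_mul
    (hB.1.stronglyMonotoneOp_pert z hβ0 hβ1.le) hα.le hpA hpB hr
    (sq_succ_mul_eq_of_succ_eq_div_sqrt hα.le hr0 hrec') (fun k => (hxA k).1)
    (fun k => (hxA k).2)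
    (fun k => exists_mem_pert_of_eq_resolvent hJB hβ0 hβ1 (hr (k + 1)) (hw k))
  obtain ⟨M, hM, hbound⟩ : ∃ M ≥ 0, ∀ k, ‖x (k + 1) - β • (u - z)‖ ≤ M * r k :=
    ⟨_, div_nonneg (norm_nonneg _) hr0.le, hsplit⟩
  have hrate : ∀ k : ℕ, 1 ≤ k → ‖β⁻¹ • x (k + 1) + z - u‖ ≤ β⁻¹ * (M * C) / k := fun k hk =>
    calc ‖β⁻¹ • x (k + 1) + z - u‖ = β⁻¹ * ‖x (k + 1) - β • (u - z)‖ := by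
          rw [← norm_smul_of_nonneg (inv_pos.2 hβ0).le, smul_sub, smul_smul,
            inv_mul_cancel₀ hβ0.ne', one_smul]
          abel_nf
      _ ≤ β⁻¹ * (M * r k) := by gcongr; exact hbound k
      _ ≤ β⁻¹ * (M * (C / k)) := by gcongr; exact hC k hk
      _ = β⁻¹ * (M * C) / k := by ring
  exact ⟨tendsto_of_norm_sub_succ_le_div hrate, _, hrate⟩

theorem stmt14 (A B : H → Set H) (hA : MaximalMonotoneOp A) (hB : MaximalMonotoneOp B)
    (z : H) (β : ℝ) (hβ : β ∈ Set.Ioo (0:ℝ) 1)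
    (r : ℕ → ℝ) (h0 : r 0 ∈ Set.Ioo 0 (2 * (1 - β) / β))
    (hrec : ∀ k, r (k + 1) = r k / Real.sqrt (1 + 2 * r k * (1 - β) / β))
    (JA JB : ℝ → H → H)
    (hJA : ∀ s : ℝ, 0 < s → ∀ q : H, ∃ m ∈ A (JA s q), q = JA s q + s • m)
    (hJB : ∀ s : ℝ, 0 < s → ∀ q : H, ∃ m ∈ B (JB s q), q = JB s q + s • m)
    (x y w : ℕ → H)
    (hx0 : x 0 = β • JA (2 * r 0 * (1 - β) / (β + r 0 * (1 - β)))
        ((β + r 0 * (1 - β))⁻¹ • w 0 + z) - β • w 0)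
    (hy0 : y 0 = (r 0)⁻¹ • (w 0 - x 0))
    (hx : ∀ k, x (k + 1) = β • JA (2 * r k * (1 - β) / (β + r k * (1 - β)))
        ((β + r k * (1 - β))⁻¹ • (w k + r k • y k) + z) - β • z)
    (hy : ∀ k, y (k + 1) = (r k)⁻¹ • (w k + r k • y k - x (k + 1)))
    (hw : ∀ k, w (k + 1) = β • JB (2 * r (k + 1) * (1 - β) / (β + r (k + 1) * (1 - β)))
        ((β + r (k + 1) * (1 - β))⁻¹ • (x (k + 1) - r (k + 1) • y (k + 1)) + z) - β • z)
    (u : H) (hu : ∃ a ∈ A u, ∃ b ∈ B u, z = u + a + b) :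
    Filter.Tendsto (fun k => β⁻¹ • x k + z) Filter.atTop (nhds u) ∧
      ∃ C : ℝ, ∀ k : ℕ, 1 ≤ k → ‖β⁻¹ • x (k + 1) + z - u‖ ≤ C / k :=
  stmt14_general A B hA hB z β hβ r h0 hrec JA JB hJA hJB x y w hx hy hw u hu
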